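/- For the covariant Pauli channel Λ, the supremum over all finite ensembles {(q_i, ρ_i)} of qubit density matrices (q_i ≥ 0, Σ q_i = 1) of the Holevo quantity χ = S(Λ(Σᵢ q_i ρ_i)) − Σᵢ q_i S(Λ(ρ_i)) equals 1 − h(ξ), where ξ = (1 + p0 − p3)/2 if (p0−p3)² ≥ (2p0+2p3−1)², and ξ = p0 + p3 otherwise. -/

import Mathlib

open Matrix
open scoped ComplexOrder

noncomputable section

/-- Pauli matrix X. -/
def PX : Matrix (Fin 2) (Fin 2) ℂ := !![0, 1; 1, 0]

/-- Pauli matrix Y. -/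
def PY : Matrix (Fin 2) (Fin 2) ℂ := !![0, -Complex.I; Complex.I, 0]

/-- Pauli matrix Z. -/
def PZ : Matrix (Fin 2) (Fin 2) ℂ := !![1, 0; 0, -1]

/-- The covariant Pauli channel `Λ(ρ) = p₀ ρ + p₁ (XρX + YρY) + p₃ ZρZ`. -/
def pauliChannel (p0 p1 p3 : ℝ) (ρ : Matrix (Fin 2) (Fin 2) ℂ) : Matrix (Fin 2) (Fin 2) ℂ :=
  (p0 : ℂ) • ρ + (p1 : ℂ) • (PX * ρ * PX + PY * ρ * PY) + (p3 : ℂ) • (PZ * ρ * PZ)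

/-- The qubit state with Bloch vector `(x, y, z)`. -/
def blochState (x y z : ℝ) : Matrix (Fin 2) (Fin 2) ℂ :=
  (1 / 2 : ℂ) • ((1 : Matrix (Fin 2) (Fin 2) ℂ) + (x : ℂ) • PX + (y : ℂ) • PY + (z : ℂ) • PZ)

/-- Von Neumann entropy (base-2) of a Hermitian matrix, via its eigenvalues. -/
def vN {n : ℕ} (A : Matrix (Fin n) (Fin n) ℂ) : ℝ :=
  if h : A.IsHermitian then -∑ i, h.eigenvalues i * Real.logb 2 (h.eigenvalues i) else 0

/-- Multiset of eigenvalues (with multiplicity) of a Hermitian matrix. -/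
def eigs {n : ℕ} (A : Matrix (Fin n) (Fin n) ℂ) : Multiset ℝ :=
  if h : A.IsHermitian then Finset.univ.val.map h.eigenvalues else 0

/-- The binary entropy function `h(t) = -t log₂ t - (1-t) log₂ (1-t)`. -/
def binEnt (t : ℝ) : ℝ := -(t * Real.logb 2 t) - (1 - t) * Real.logb 2 (1 - t)

/-!
In Bloch coordinates `ρ = (1 + x X + y Y + z Z) / 2` the channel is the diagonal map
`(x, y, z) ↦ (λ x, λ y, μ z)` with `λ = p₀ - p₃`, `μ = 2p₀ + 2p₃ - 1`, and the entropy of a qubit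
state with Bloch vector `r` is `h((1 + |r|) / 2)`, which decreases in `|r|`. Hence every output
entropy lies between `h((1 + κ) / 2)`, `κ = max(|λ|, |μ|)`, and `1`, so `χ ≤ 1 - h((1 + κ) / 2)`.
Equality holds for the two antipodal pure states on the axis the channel shrinks least: their
average, the maximally mixed state, is fixed by the channel. Finally `h((1 + κ) / 2) = h(ξ)`
since `h(t) = h(1 - t)`.
-/

lemma binEnt_eq_binEntropy_div_log (t : ℝ) : binEnt t = Real.binEntropy t / Real.log 2 := by
  simp only [binEnt, Real.binEntropy, Real.logb, Real.log_inv]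
  ring

lemma binEnt_one_sub (t : ℝ) : binEnt (1 - t) = binEnt t := by
  simp only [binEnt_eq_binEntropy_div_log, Real.binEntropy_one_sub]

lemma binEnt_half : binEnt (1 / 2) = 1 := by
  rw [binEnt_eq_binEntropy_div_log, one_div, Real.binEntropy_two_inv,
    div_self (Real.log_pos one_lt_two).ne']

lemma binEnt_one_add_abs_div_two (s : ℝ) : binEnt ((1 + |s|) / 2) = binEnt ((1 + s) / 2) := by
  rcases abs_choice s with h | h
  · rw [h]
  · rw [h, ← binEnt_one_sub]
    ring_nf

lemma antitoneOn_binEnt_one_add_div_two :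
    AntitoneOn (fun s => binEnt ((1 + s) / 2)) (Set.Icc 0 1) := by
  intro s hs t ht hst
  simp only [binEnt_eq_binEntropy_div_log]
  gcongr ?_ / _
  refine Real.binEntropy_strictAntiOn.antitoneOn ?_ ?_ (by linarith)
  · constructor <;> linarith [hs.1, hs.2]
  · constructor <;> linarith [ht.1, ht.2]

lemma Matrix.IsHermitian.eigenvalues_sum_prod_fin_two {A : Matrix (Fin 2) (Fin 2) ℂ}
    (hA : A.IsHermitian) :
    ((hA.eigenvalues 0 + hA.eigenvalues 1 : ℝ) : ℂ) = A.trace ∧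
      ((hA.eigenvalues 0 * hA.eigenvalues 1 : ℝ) : ℂ) = A.det := by
  rw [hA.trace_eq_sum_eigenvalues, hA.det_eq_prod_eigenvalues]
  simp [Fin.sum_univ_two, Fin.prod_univ_two]

lemma vN_eq_binEnt_of_trace_eq_one {A : Matrix (Fin 2) (Fin 2) ℂ} (hA : A.IsHermitian)
    (ht : A.trace = 1) : vN A = binEnt ((1 + √(1 - 4 * A.det.re)) / 2) := by
  obtain ⟨htr, hdet⟩ := hA.eigenvalues_sum_prod_fin_two
  rw [vN, dif_pos hA, Fin.sum_univ_two]
  set e := hA.eigenvalues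
  have hsum : e 0 + e 1 = 1 := by exact_mod_cast htr.trans ht
  have hdisc : 1 - 4 * A.det.re = (e 0 - e 1) ^ 2 := by
    rw [← hdet, Complex.ofReal_re]
    linear_combination (-(1 + e 0 + e 1)) * hsum
  rw [hdisc, Real.sqrt_sq_eq_abs, binEnt_one_add_abs_div_two, binEnt,
    show (1 + (e 0 - e 1)) / 2 = e 0 by linarith, show 1 - e 0 = e 1 by linarith]
  ring

lemma blochState_eq (x y z : ℝ) :
    blochState x y z = !![((1 + z : ℝ) : ℂ) / 2, (x - y * Complex.I) / 2;
      (x + y * Complex.I) / 2, ((1 - z : ℝ) : ℂ) / 2] := by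
  ext i j
  fin_cases i <;> fin_cases j <;> simp [blochState, PX, PY, PZ] <;> ring

lemma blochState_isHermitian (x y z : ℝ) : (blochState x y z).IsHermitian := by
  rw [blochState_eq]
  ext i j
  fin_cases i <;> fin_cases j <;> simp [Complex.conj_ofReal, sub_eq_add_neg]

lemma trace_blochState (x y z : ℝ) : (blochState x y z).trace = 1 := by
  rw [blochState_eq, trace_fin_two_of]
  push_cast
  ring

lemma det_blochState (x y z : ℝ) :
    (blochState x y z).det = ((1 - (x ^ 2 + y ^ 2 + z ^ 2)) / 4 : ℝ) := by
  rw [blochState_eq, det_fin_two_of]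
  push_cast
  linear_combination (y : ℂ) ^ 2 / 4 * Complex.I_sq

lemma vN_blochState (x y z : ℝ) :
    vN (blochState x y z) = binEnt ((1 + √(x ^ 2 + y ^ 2 + z ^ 2)) / 2) := by
  rw [vN_eq_binEnt_of_trace_eq_one (blochState_isHermitian x y z) (trace_blochState x y z),
    det_blochState, Complex.ofReal_re]
  ring_nf

lemma Matrix.IsHermitian.exists_eq_blochState {A : Matrix (Fin 2) (Fin 2) ℂ}
    (hA : A.IsHermitian) (ht : A.trace = 1) : ∃ x y z : ℝ, A = blochState x y z := by
  have h00 := hA.apply 0 0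
  have h11 := hA.apply 1 1
  have h10 := hA.apply 1 0
  rw [trace_fin_two] at ht
  refine ⟨2 * (A 0 1).re, -2 * (A 0 1).im, (A 0 0).re - (A 1 1).re, ?_⟩
  rw [blochState_eq]
  ext i j
  fin_cases i <;> fin_cases j <;> apply Complex.ext <;>
    simp [Complex.ext_iff] at h00 h11 h10 ht ⊢ <;> linarith

lemma blochState_posSemidef_iff {x y z : ℝ} :
    (blochState x y z).PosSemidef ↔ x ^ 2 + y ^ 2 + z ^ 2 ≤ 1 := by
  have hA := blochState_isHermitian x y z
  obtain ⟨htr, hdet⟩ := hA.eigenvalues_sum_prod_fin_two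
  rw [trace_blochState] at htr
  rw [det_blochState] at hdet
  constructor
  · intro h
    have := h.det_nonneg
    rw [det_blochState, Complex.zero_le_real] at this
    linarith
  · intro hr
    have hsum : hA.eigenvalues 0 + hA.eigenvalues 1 = 1 := by exact_mod_cast htr
    have hprod : 0 ≤ hA.eigenvalues 0 * hA.eigenvalues 1 := by
      rw [Complex.ofReal_inj.mp hdet]
      linarith
    rw [hA.posSemidef_iff_eigenvalues_nonneg]
    intro i
    fin_cases i <;> simp <;> nlinarith

lemma pauliChannel_of (p0 p1 p3 : ℝ) (a b c d : ℂ) :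
    pauliChannel p0 p1 p3 !![a, b; c, d] =
      !![(p0 + p3 : ℂ) * a + 2 * p1 * d, (p0 - p3 : ℂ) * b;
        (p0 - p3 : ℂ) * c, 2 * p1 * a + (p0 + p3 : ℂ) * d] := by
  ext i j
  fin_cases i <;> fin_cases j <;>
    simp [pauliChannel, PX, PY, PZ] <;> ring_nf <;>
    simp only [Complex.I_sq] <;> ring

lemma pauliChannel_blochState {p0 p1 p3 : ℝ} (hsum : p0 + 2 * p1 + p3 = 1) (x y z : ℝ) :
    pauliChannel p0 p1 p3 (blochState x y z) =
      blochState ((p0 - p3) * x) ((p0 - p3) * y) ((2 * p0 + 2 * p3 - 1) * z) := by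
  have hp1 : (p1 : ℂ) = (1 - p0 - p3) / 2 := by
    rw [show p1 = (1 - p0 - p3) / 2 by linarith]
    push_cast
    ring
  rw [blochState_eq, blochState_eq, pauliChannel_of, hp1]
  ext i j
  fin_cases i <;> fin_cases j <;> simp <;> ring

lemma vN_pauliChannel_blochState {p0 p1 p3 : ℝ} (hsum : p0 + 2 * p1 + p3 = 1) (x y z : ℝ) :
    vN (pauliChannel p0 p1 p3 (blochState x y z)) =
      binEnt ((1 + √((p0 - p3) ^ 2 * (x ^ 2 + y ^ 2) +
        (2 * p0 + 2 * p3 - 1) ^ 2 * z ^ 2)) / 2) := by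
  rw [pauliChannel_blochState hsum, vN_blochState]
  ring_nf

def holevoQuantity {ι : Type*} [Fintype ι] {n : ℕ}
    (Φ : Matrix (Fin n) (Fin n) ℂ → Matrix (Fin n) (Fin n) ℂ) (q : ι → ℝ)
    (ρs : ι → Matrix (Fin n) (Fin n) ℂ) : ℝ :=
  vN (Φ (∑ i, (q i : ℂ) • ρs i)) - ∑ i, q i * vN (Φ (ρs i))

section Ensemble

variable {ι : Type*} [Fintype ι] {n : ℕ} {q : ι → ℝ} {ρs : ι → Matrix (Fin n) (Fin n) ℂ}

lemma posSemidef_sum_smul (hq : ∀ i, 0 ≤ q i) (hρs : ∀ i, (ρs i).PosSemidef) :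
    (∑ i, (q i : ℂ) • ρs i).PosSemidef :=
  posSemidef_sum _ fun i _ => (hρs i).smul (Complex.zero_le_real.mpr (hq i))

lemma trace_sum_smul (hq : ∑ i, q i = 1) (hρs : ∀ i, (ρs i).trace = 1) :
    (∑ i, (q i : ℂ) • ρs i).trace = 1 := by
  simp [trace_sum, hρs, ← Complex.ofReal_sum, hq]

lemma holevoQuantity_le {Φ : Matrix (Fin n) (Fin n) ℂ → Matrix (Fin n) (Fin n) ℂ} {lo hi : ℝ}
    (hΦ : ∀ ρ : Matrix (Fin n) (Fin n) ℂ, ρ.PosSemidef → ρ.trace = 1 → vN (Φ ρ) ∈ Set.Icc lo hi)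
    (hq : ∀ i, 0 ≤ q i) (hq1 : ∑ i, q i = 1)
    (hρs : ∀ i, (ρs i).PosSemidef ∧ (ρs i).trace = 1) :
    holevoQuantity Φ q ρs ≤ hi - lo := by
  have hmix := (hΦ _ (posSemidef_sum_smul hq fun i => (hρs i).1)
    (trace_sum_smul hq1 fun i => (hρs i).2)).2
  have hparts : lo ≤ ∑ i, q i * vN (Φ (ρs i)) :=
    calc lo = ∑ i, q i * lo := by rw [← Finset.sum_mul, hq1, one_mul]
      _ ≤ ∑ i, q i * vN (Φ (ρs i)) := by
        gcongr with i
        · exact hq i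
        · exact (hΦ _ (hρs i).1 (hρs i).2).1
  rw [holevoQuantity]
  linarith

end Ensemble

def pauliContraction (p0 p3 : ℝ) : ℝ := max |p0 - p3| |2 * p0 + 2 * p3 - 1|

section PauliChannel

variable {p0 p1 p3 : ℝ}

lemma pauliContraction_nonneg : 0 ≤ pauliContraction p0 p3 :=
  le_max_of_le_left (abs_nonneg _)

lemma pauliContraction_le_one (h0 : 0 ≤ p0) (h1 : 0 ≤ p1) (h3 : 0 ≤ p3)
    (hsum : p0 + 2 * p1 + p3 = 1) : pauliContraction p0 p3 ≤ 1 :=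
  max_le (abs_le.mpr ⟨by linarith, by linarith⟩) (abs_le.mpr ⟨by linarith, by linarith⟩)

lemma sqrt_pauli_normSq_le_pauliContraction {x y z : ℝ} (hr : x ^ 2 + y ^ 2 + z ^ 2 ≤ 1) :
    √((p0 - p3) ^ 2 * (x ^ 2 + y ^ 2) + (2 * p0 + 2 * p3 - 1) ^ 2 * z ^ 2) ≤
      pauliContraction p0 p3 := by
  have hκ0 : 0 ≤ pauliContraction p0 p3 := pauliContraction_nonneg
  have hlam : (p0 - p3) ^ 2 ≤ pauliContraction p0 p3 ^ 2 :=
    sq_le_sq.mpr ((le_max_left _ _).trans (le_abs_self _))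
  have hmu : (2 * p0 + 2 * p3 - 1) ^ 2 ≤ pauliContraction p0 p3 ^ 2 :=
    sq_le_sq.mpr ((le_max_right _ _).trans (le_abs_self _))
  refine Real.sqrt_le_iff.mpr ⟨hκ0, ?_⟩
  nlinarith [sq_nonneg x, sq_nonneg y, sq_nonneg z, sq_nonneg (pauliContraction p0 p3)]

lemma vN_pauliChannel_mem_Icc (h0 : 0 ≤ p0) (h1 : 0 ≤ p1) (h3 : 0 ≤ p3)
    (hsum : p0 + 2 * p1 + p3 = 1) {ρ : Matrix (Fin 2) (Fin 2) ℂ} (hρ : ρ.PosSemidef)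
    (ht : ρ.trace = 1) :
    vN (pauliChannel p0 p1 p3 ρ) ∈ Set.Icc (binEnt ((1 + pauliContraction p0 p3) / 2)) 1 := by
  obtain ⟨x, y, z, rfl⟩ := hρ.isHermitian.exists_eq_blochState ht
  have hsκ := sqrt_pauli_normSq_le_pauliContraction (p0 := p0) (p3 := p3)
    (blochState_posSemidef_iff.mp hρ)
  have hκ1 := pauliContraction_le_one h0 h1 h3 hsum
  rw [vN_pauliChannel_blochState hsum]
  set s := √((p0 - p3) ^ 2 * (x ^ 2 + y ^ 2) + (2 * p0 + 2 * p3 - 1) ^ 2 * z ^ 2)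
  have hs0 : 0 ≤ s := Real.sqrt_nonneg _
  constructor
  · exact antitoneOn_binEnt_one_add_div_two ⟨hs0, hsκ.trans hκ1⟩
      ⟨pauliContraction_nonneg, hκ1⟩ hsκ
  · have h : binEnt ((1 + s) / 2) ≤ binEnt ((1 + 0) / 2) :=
      antitoneOn_binEnt_one_add_div_two ⟨le_rfl, zero_le_one⟩ ⟨hs0, hsκ.trans hκ1⟩ hs0
    rwa [add_zero, binEnt_half] at h

lemma holevoQuantity_pauliChannel_antipodal (hsum : p0 + 2 * p1 + p3 = 1) (x y z : ℝ) :
    holevoQuantity (pauliChannel p0 p1 p3) ![1 / 2, 1 / 2]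
        ![blochState x y z, blochState (-x) (-y) (-z)] =
      1 - binEnt ((1 + √((p0 - p3) ^ 2 * (x ^ 2 + y ^ 2) +
        (2 * p0 + 2 * p3 - 1) ^ 2 * z ^ 2)) / 2) := by
  have hmix : ∑ i, ((![1 / 2, 1 / 2] i : ℝ) : ℂ) •
      ![blochState x y z, blochState (-x) (-y) (-z)] i = blochState 0 0 0 := by
    simp only [Fin.sum_univ_two, cons_val_zero, cons_val_one, blochState, Complex.ofReal_neg,
      Complex.ofReal_zero, Complex.coe_smul]
    module
  rw [holevoQuantity, hmix, Fin.sum_univ_two]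
  simp only [Matrix.cons_val_zero, Matrix.cons_val_one, vN_pauliChannel_blochState hsum, neg_sq]
  have hzero :
      √((p0 - p3) ^ 2 * ((0 : ℝ) ^ 2 + 0 ^ 2) + (2 * p0 + 2 * p3 - 1) ^ 2 * 0 ^ 2) = 0 := by
    simp
  rw [hzero, add_zero, binEnt_half]
  ring

lemma exists_unit_bloch_vector_pauli_normSq_eq :
    ∃ x y z : ℝ, x ^ 2 + y ^ 2 + z ^ 2 = 1 ∧
      (p0 - p3) ^ 2 * (x ^ 2 + y ^ 2) + (2 * p0 + 2 * p3 - 1) ^ 2 * z ^ 2 =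
        pauliContraction p0 p3 ^ 2 := by
  rcases le_total |p0 - p3| |2 * p0 + 2 * p3 - 1| with h | h
  · exact ⟨0, 0, 1, by norm_num, by simp [pauliContraction, max_eq_right h]⟩
  · exact ⟨1, 0, 0, by norm_num, by simp [pauliContraction, max_eq_left h]⟩

lemma exists_ensemble_holevoQuantity_pauliChannel_eq (hsum : p0 + 2 * p1 + p3 = 1) :
    ∃ ρs : Fin 2 → Matrix (Fin 2) (Fin 2) ℂ, (∀ i, (ρs i).PosSemidef ∧ (ρs i).trace = 1) ∧
      holevoQuantity (pauliChannel p0 p1 p3) ![1 / 2, 1 / 2] ρs =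
        1 - binEnt ((1 + pauliContraction p0 p3) / 2) := by
  obtain ⟨x, y, z, hr, hκ⟩ := exists_unit_bloch_vector_pauli_normSq_eq (p0 := p0) (p3 := p3)
  refine ⟨![blochState x y z, blochState (-x) (-y) (-z)], ?_, ?_⟩
  · rw [Fin.forall_fin_two]
    exact ⟨⟨blochState_posSemidef_iff.mpr hr.le, trace_blochState ..⟩,
      ⟨blochState_posSemidef_iff.mpr (by linarith), trace_blochState ..⟩⟩
  · rw [holevoQuantity_pauliChannel_antipodal hsum, hκ, Real.sqrt_sq pauliContraction_nonneg]

lemma binEnt_ite_eq_binEnt_pauliContraction :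
    binEnt (if (p0 - p3) ^ 2 ≥ (2 * p0 + 2 * p3 - 1) ^ 2 then (1 + p0 - p3) / 2 else p0 + p3) =
      binEnt ((1 + pauliContraction p0 p3) / 2) := by
  rw [pauliContraction]
  split_ifs with h
  · rw [max_eq_left (sq_le_sq.mp h), binEnt_one_add_abs_div_two]
    ring_nf
  · rw [max_eq_right (sq_le_sq.mp (not_le.mp h).le), binEnt_one_add_abs_div_two]
    ring_nf

end PauliChannel

/-- The Holevo capacity of the covariant Pauli channel: the supremum of the Holevo
quantity `χ = S(Λ(∑ qᵢ ρᵢ)) - ∑ qᵢ S(Λ(ρᵢ))` over all finite ensembles of qubit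
density matrices equals `1 - h(ξ)`, with `ξ = (1+p₀-p₃)/2` if
`(p₀-p₃)² ≥ (2p₀+2p₃-1)²` and `ξ = p₀+p₃` otherwise. -/
theorem pauliChannel_holevo_capacity (p0 p1 p3 : ℝ) (h0 : 0 ≤ p0) (h1 : 0 ≤ p1)
    (h3 : 0 ≤ p3) (hsum : p0 + 2 * p1 + p3 = 1) :
    IsLUB
      {c : ℝ | ∃ (m : ℕ) (q : Fin m → ℝ) (ρs : Fin m → Matrix (Fin 2) (Fin 2) ℂ),
        (∀ i, 0 ≤ q i) ∧ (∑ i, q i = 1) ∧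
        (∀ i, (ρs i).PosSemidef ∧ (ρs i).trace = 1) ∧
        c = vN (pauliChannel p0 p1 p3 (∑ i, (q i : ℂ) • ρs i)) -
              ∑ i, q i * vN (pauliChannel p0 p1 p3 (ρs i))}
      (1 - binEnt (if (p0 - p3) ^ 2 ≥ (2 * p0 + 2 * p3 - 1) ^ 2 then (1 + p0 - p3) / 2
                   else p0 + p3)) := by
  rw [binEnt_ite_eq_binEnt_pauliContraction]
  refine ⟨?_, fun b hb => hb ?_⟩
  · rintro _ ⟨m, q, ρs, hq, hq1, hρs, rfl⟩
    exact holevoQuantity_le (fun _ => vN_pauliChannel_mem_Icc h0 h1 h3 hsum) hq hq1 hρs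
  · obtain ⟨ρs, hρs, hχ⟩ := exists_ensemble_holevoQuantity_pauliChannel_eq hsum
    exact ⟨2, ![1 / 2, 1 / 2], ρs, by simp [Fin.forall_fin_two], by norm_num, hρs, hχ.symm⟩

end
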